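/- arXiv:1512.03779 — 2 statements merged into one kernel-verified Lean document; each statement's English description precedes it below -/
import Mathlib

section
/- Every maximal chain in the semilattice of idempotents E(I^cf_λ) is an ω-chain, i.e., it is order-isomorphic to the set {0, −1, −2, −3, ...} of non-positive integers with the usual order. -/
/-! An idempotent of `I^cf_λ` is the identity of its cofinite domain, and `e ≤ f` iff
`dom e ⊆ dom f`. So a maximal chain of idempotents becomes, via `e ↦ λ ∖ dom e`, a chain `S` of
finite sets that contains every finite set comparable with all its members. In `S` inclusion is
the order of cardinalities, and each `s ∈ S` has a successor of cardinality `|s| + 1`: add to `s`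
a point of the least strict superset of `s` in `S`, or, if there is none, any point outside `s`
(this is where `λ` is infinite). Hence `e ↦ -|λ ∖ dom e|` is an isomorphism onto `{0, -1, -2, …}`. -/

open Function Set

namespace IcfPaper

variable {ι : Type*}

lemma trans_none_finite {f g : ι ≃. ι}
    (hf : {a | f a = none}.Finite) (hg : {b | g b = none}.Finite) :
    {a | (f.trans g) a = none}.Finite := by
  have hsub : {a | (f.trans g) a = none} ⊆
      {a | f a = none} ∪ ⋃ b ∈ {b | g b = none}, {a | f.symm b = some a} := by
    intro a ha
    simp only [Set.mem_setOf_eq] at ha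
    rcases hfa : f a with _ | b
    · exact Or.inl hfa
    · have hg' : g b = none := by
        have : (f.trans g) a = (f a).bind g := rfl
        rw [this, hfa] at ha
        exact ha
      refine Or.inr ?_
      refine Set.mem_biUnion hg' ?_
      exact (PEquiv.eq_some_iff f).2 hfa
  refine Set.Finite.subset (hf.union (hg.biUnion ?_)) hsub
  intro b _
  apply Set.Subsingleton.finite
  intro a1 h1 a2 h2
  simp only [Set.mem_setOf_eq] at h1 h2
  rw [h1] at h2
  exact Option.some_injective _ h2

/-- The monoid of injective partial selfmaps of `ι` with cofinite domain and range. -/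
def Icf (ι : Type*) : Type _ :=
  {f : ι ≃. ι // {a | f a = none}.Finite ∧ {b | f.symm b = none}.Finite}

namespace Icf

instance : Monoid (Icf ι) where
  mul f g := ⟨f.1.trans g.1, trans_none_finite f.2.1 g.2.1, by
      rw [PEquiv.symm_trans_rev]
      exact trans_none_finite g.2.2 f.2.2⟩
  one := ⟨PEquiv.refl ι, by
      constructor <;>
      · convert Set.finite_empty
        ext a
        simp only [Set.mem_setOf_eq, Set.mem_empty_iff_false, iff_false]
        intro h
        simp at h⟩
  mul_assoc a b c := Subtype.ext (PEquiv.trans_assoc _ _ _)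
  one_mul a := Subtype.ext (PEquiv.refl_trans _)
  mul_one a := Subtype.ext (PEquiv.trans_refl _)

/-- The domain of an element of `Icf ι`. -/
def dom (f : Icf ι) : Set ι := {a | (f.1 a).isSome}

/-- The range of an element of `Icf ι`. -/
def ran (f : Icf ι) : Set ι := {b | (f.1.symm b).isSome}

/-- `d̄ f`, the number of points of `ι` outside of the domain of `f`. -/
noncomputable def dbar (f : Icf ι) : ℕ := (dom f)ᶜ.ncard

/-- `r̄ f`, the number of points of `ι` outside of the range of `f`. -/
noncomputable def rbar (f : Icf ι) : ℕ := (ran f)ᶜ.ncard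

end Icf

/-- The bicyclic semigroup `⟨p, q | pq = 1⟩`, realized as `ℕ × ℕ` with the operation
`(a,b)(c,d) = (a - b + max(b,c), d - c + max(b,c))`. -/
def Bicyclic : Type := ℕ × ℕ

instance : Mul Bicyclic :=
  ⟨fun x y => (x.1 - x.2 + max x.2 y.1, y.2 - y.1 + max x.2 y.1)⟩

end IcfPaper

namespace PEquiv

variable {α : Type*}

theorem ofSet_trans_ofSet (s t : Set α) [DecidablePred (· ∈ s)] [DecidablePred (· ∈ t)]
    [DecidablePred (· ∈ s ∩ t)] : (ofSet s).trans (ofSet t) = ofSet (s ∩ t) := by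
  ext a b
  simp only [trans_eq_some, ofSet_eq_some_iff, Set.mem_inter_iff]
  grind

theorem ofSet_inj {s t : Set α} [DecidablePred (· ∈ s)] [DecidablePred (· ∈ t)] :
    ofSet s = ofSet t ↔ s = t := by
  refine ⟨fun h => Set.ext fun a => ?_, fun h => by subst h; congr⟩
  rw [← ofSet_eq_some_self_iff, h, ofSet_eq_some_self_iff]

end PEquiv

section ChainOfFiniteSets

variable {ι : Type*} {S : Set (Set ι)}

theorem IsChain.subset_iff_ncard_le (hS : IsChain (· ⊆ ·) S) (hfin : ∀ s ∈ S, s.Finite)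
    {s t : Set ι} (hs : s ∈ S) (ht : t ∈ S) : s ⊆ t ↔ s.ncard ≤ t.ncard := by
  refine ⟨fun h => Set.ncard_le_ncard h (hfin t ht), fun h => ?_⟩
  rcases hS.total hs ht with hst | hts
  · exact hst
  · exact (Set.eq_of_subset_of_ncard_le hts h (hfin s hs)).superset

theorem IsChain.exists_ncard_eq_succ [Infinite ι] (hS : IsChain (· ⊆ ·) S)
    (hfin : ∀ s ∈ S, s.Finite)
    (hsat : ∀ G : Set ι, G.Finite → (∀ s ∈ S, s ⊆ G ∨ G ⊆ s) → G ∈ S)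
    {s : Set ι} (hs : s ∈ S) : ∃ t ∈ S, t.ncard = s.ncard + 1 := by
  suffices h : ∃ x ∉ s, ∀ t ∈ S, s ⊂ t → x ∈ t by
    obtain ⟨x, hxs, hx⟩ := h
    refine ⟨insert x s, hsat _ ((hfin s hs).insert x) fun t ht => ?_,
      Set.ncard_insert_of_notMem hxs (hfin s hs)⟩
    rcases hS.total ht hs with hts | hst
    · exact Or.inl (hts.trans (Set.subset_insert x s))
    rcases hst.eq_or_ssubset with rfl | hst
    · exact Or.inl (Set.subset_insert _ _)
    · exact Or.inr (Set.insert_subset (hx t ht hst) hst.subset)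
  by_cases hsup : {t | t ∈ S ∧ s ⊂ t}.Nonempty
  · obtain ⟨t, ⟨htS, hst⟩, hmin⟩ := (measure Set.ncard).wf.has_min _ hsup
    obtain ⟨x, hxt, hxs⟩ := Set.exists_of_ssubset hst
    exact ⟨x, hxs, fun u hu hsu =>
      (hS.subset_iff_ncard_le hfin htS hu).2 (Nat.le_of_not_lt (hmin u ⟨hu, hsu⟩)) hxt⟩
  · obtain ⟨x, hxs⟩ := (hfin s hs).infinite_compl.nonempty
    exact ⟨x, hxs, fun t ht hst => absurd ⟨t, ht, hst⟩ hsup⟩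

theorem IsChain.exists_ncard_eq [Infinite ι] (hS : IsChain (· ⊆ ·) S)
    (hfin : ∀ s ∈ S, s.Finite)
    (hsat : ∀ G : Set ι, G.Finite → (∀ s ∈ S, s ⊆ G ∨ G ⊆ s) → G ∈ S) (n : ℕ) :
    ∃ s ∈ S, s.ncard = n := by
  induction n with
  | zero => exact ⟨∅, hsat ∅ Set.finite_empty fun s _ => Or.inr s.empty_subset, Set.ncard_empty ι⟩
  | succ n ih =>
    obtain ⟨s, hs, rfl⟩ := ih
    exact hS.exists_ncard_eq_succ hfin hsat hs

end ChainOfFiniteSets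

namespace IcfPaper

namespace Icf

variable {ι : Type*}

open scoped Classical

lemma val_mul (f g : Icf ι) : (f * g).1 = f.1.trans g.1 := rfl

lemma val_inj {f g : Icf ι} : f.1 = g.1 ↔ f = g := Subtype.val_inj

lemma compl_dom_eq (f : Icf ι) : (dom f)ᶜ = {a | f.1 a = none} := by
  ext a
  simp [dom]

lemma compl_dom_finite (f : Icf ι) : (dom f)ᶜ.Finite := by
  rw [compl_dom_eq]
  exact f.2.1

lemma val_eq_ofSet_dom {e : Icf ι} (he : IsIdempotentElem e) : e.1 = PEquiv.ofSet (dom e) := by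
  have fixed : ∀ {a b}, e.1 a = some b → b = a := fun {a b} hab => by
    have hbb : e.1 b = some b := by
      have h : (e.1 a).bind e.1 = e.1 a := congrArg (fun f : Icf ι => f.1 a) he
      rwa [hab, Option.bind_some] at h
    exact e.1.inj hbb hab
  ext a b
  rw [PEquiv.ofSet_eq_some_iff]
  refine ⟨fun hab => ⟨fixed hab, ?_⟩, ?_⟩
  · rw [fixed hab]
    simp [dom, hab]
  · rintro ⟨rfl, ha⟩
    obtain ⟨c, hc⟩ := Option.isSome_iff_exists.1 ha
    rwa [fixed hc] at hc

lemma setOf_ofSet_eq_none (A : Set ι) : {a | PEquiv.ofSet A a = none} = Aᶜ := by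
  ext a
  by_cases ha : a ∈ A <;> simp [PEquiv.ofSet, ha]

noncomputable def ofSet (A : Set ι) (hA : Aᶜ.Finite) : Icf ι :=
  ⟨PEquiv.ofSet A, by rwa [setOf_ofSet_eq_none],
    by rwa [PEquiv.ofSet_symm, setOf_ofSet_eq_none]⟩

lemma isIdempotentElem_ofSet (A : Set ι) (hA : Aᶜ.Finite) : IsIdempotentElem (ofSet A hA) :=
  Subtype.ext <| (PEquiv.ofSet_trans_ofSet A A).trans (PEquiv.ofSet_inj.2 (Set.inter_self A))

lemma dom_ofSet (A : Set ι) (hA : Aᶜ.Finite) : dom (ofSet A hA) = A := by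
  ext a
  by_cases ha : a ∈ A <;> simp [dom, ofSet, PEquiv.ofSet, ha]

lemma mul_eq_left_and_mul_eq_right_iff {e f : Icf ι} (he : IsIdempotentElem e)
    (hf : IsIdempotentElem f) : (e * f = e ∧ f * e = e) ↔ dom e ⊆ dom f := by
  simp only [← val_inj, val_mul, val_eq_ofSet_dom he, val_eq_ofSet_dom hf,
    PEquiv.ofSet_trans_ofSet, PEquiv.ofSet_inj, Set.inter_eq_left, Set.inter_eq_right, and_self]

end Icf

open Icf

variable {ι : Type*} {C : Set (Icf ι)}

lemma isChain_image_compl_dom (hCE : ∀ e ∈ C, IsIdempotentElem e)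
    (hchain : IsChain (fun e f : Icf ι => e * f = e ∧ f * e = e) C) :
    IsChain (· ⊆ ·) ((fun e : Icf ι => (dom e)ᶜ) '' C) := by
  rintro _ ⟨e, he, rfl⟩ _ ⟨f, hf, rfl⟩ hne
  simp only [Set.compl_subset_compl, ← mul_eq_left_and_mul_eq_right_iff (hCE e he) (hCE f hf),
    ← mul_eq_left_and_mul_eq_right_iff (hCE f hf) (hCE e he)]
  exact (hchain he hf (ne_of_apply_ne (fun e : Icf ι => (dom e)ᶜ) hne)).symm

lemma mem_image_compl_dom_of_forall (hCE : ∀ e ∈ C, IsIdempotentElem e)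
    (hchain : IsChain (fun e f : Icf ι => e * f = e ∧ f * e = e) C)
    (hmax : ∀ D : Set (Icf ι), (∀ e ∈ D, IsIdempotentElem e) →
      IsChain (fun e f : Icf ι => e * f = e ∧ f * e = e) D → C ⊆ D → D = C)
    {G : Set ι} (hG : G.Finite) (hcomp : ∀ e ∈ C, (dom e)ᶜ ⊆ G ∨ G ⊆ (dom e)ᶜ) :
    G ∈ (fun e : Icf ι => (dom e)ᶜ) '' C := by
  have hGc : Gᶜᶜ.Finite := by rwa [compl_compl]
  set g := ofSet Gᶜ hGc
  have hg : IsIdempotentElem g := isIdempotentElem_ofSet _ _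
  have hdom : (dom g)ᶜ = G := by rw [dom_ofSet, compl_compl]
  have hins : insert g C = C := by
    refine hmax _ (Set.forall_mem_insert.2 ⟨hg, hCE⟩) (hchain.insert fun e he _ => ?_)
      (Set.subset_insert g C)
    rw [mul_eq_left_and_mul_eq_right_iff hg (hCE e he),
      mul_eq_left_and_mul_eq_right_iff (hCE e he) hg]
    simpa only [← hdom, Set.compl_subset_compl] using hcomp e he
  exact ⟨g, Set.insert_eq_self.1 hins, hdom⟩

/-- Every maximal chain of idempotents of `Icf ι` is an `ω`-chain, i.e. order-isomorphic to
the non-positive integers with the usual order. -/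
theorem statement2 {ι : Type*} [Infinite ι] (C : Set (Icf ι))
    (hCE : ∀ e ∈ C, e * e = e)
    (hchain : IsChain (fun e f : Icf ι => e * f = e ∧ f * e = e) C)
    (hmax : ∀ D : Set (Icf ι), (∀ e ∈ D, e * e = e) →
      IsChain (fun e f : Icf ι => e * f = e ∧ f * e = e) D → C ⊆ D → D = C) :
    ∃ φ : C → {n : ℤ // n ≤ 0}, Function.Bijective φ ∧
      ∀ x y : C, ((x : Icf ι) * (y : Icf ι) = (x : Icf ι) ∧
        (y : Icf ι) * (x : Icf ι) = (x : Icf ι)) ↔ φ x ≤ φ y := by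
  set S := (fun e : Icf ι => (dom e)ᶜ) '' C
  have hfin : ∀ s ∈ S, s.Finite := by
    rintro _ ⟨e, -, rfl⟩
    exact compl_dom_finite e
  have hS : IsChain (· ⊆ ·) S := isChain_image_compl_dom hCE hchain
  have hsat : ∀ G : Set ι, G.Finite → (∀ s ∈ S, s ⊆ G ∨ G ⊆ s) → G ∈ S :=
    fun G hG hcomp => mem_image_compl_dom_of_forall hCE hchain hmax hG
      fun e he => hcomp _ ⟨e, he, rfl⟩
  have hle : ∀ e ∈ C, ∀ f ∈ C, (e * f = e ∧ f * e = e) ↔ dbar f ≤ dbar e := fun e he f hf => by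
    rw [mul_eq_left_and_mul_eq_right_iff (hCE e he) (hCE f hf), ← Set.compl_subset_compl]
    exact hS.subset_iff_ncard_le hfin ⟨f, hf, rfl⟩ ⟨e, he, rfl⟩
  refine ⟨fun x => ⟨-(dbar (x : Icf ι) : ℤ), by omega⟩, ⟨fun x y hxy => ?_, fun m => ?_⟩,
    fun x y => (hle x x.2 y y.2).trans (by simp)⟩
  · have hd : dbar (x : Icf ι) = dbar (y : Icf ι) := by simpa using hxy
    obtain ⟨-, hyx⟩ := (hle x x.2 y y.2).2 hd.ge
    obtain ⟨hyx', -⟩ := (hle y y.2 x x.2).2 hd.le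
    exact Subtype.ext (hyx.symm.trans hyx')
  · obtain ⟨_, ⟨e, he, rfl⟩, hn⟩ := hS.exists_ncard_eq hfin hsat (-(m : ℤ)).toNat
    refine ⟨⟨e, he⟩, Subtype.ext ?_⟩
    simp only [dbar, hn]
    omega

end IcfPaper
end

section
/- For all α, β in I^cf_λ, both sets {χ ∈ I^cf_λ : α·χ = β} and {χ ∈ I^cf_λ : χ·α = β} are finite. Consequently, every left translation and every right translation by an element of I^cf_λ is a finite-to-one map. -/
open Function Set

namespace IcfPaper

variable {ι : Type*}

/-!
A solution `χ` of `α χ = β` is forced to agree with `α⁻¹ β` on the range of `α`; at each of the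
finitely many points outside that range it is either undefined or takes one of the finitely many
values outside the range of `β`. Passing to inverses turns `χ α = β` into `α⁻¹ χ⁻¹ = β⁻¹`.
-/

section

open PEquiv

lemma _root_.PEquiv.apply_eq_of_trans_eq {α β γ : Type*}
    {f : α ≃. β} {h : β ≃. γ} {g : α ≃. γ} (hfg : f.trans h = g)
    {a : α} {b : β} (hab : f a = some b) : h b = g a := by
  rw [← hfg, show f.trans h a = (f a).bind h from rfl, hab, Option.bind_some]

lemma _root_.PEquiv.symm_eq_none_of_trans_eq {α β γ : Type*}
    {f : α ≃. β} {h : β ≃. γ} {g : α ≃. γ} (hfg : f.trans h = g)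
    {b : β} (hb : f.symm b = none) {c : γ} (hbc : h b = some c) : g.symm c = none := by
  rw [← hfg, symm_trans_rev, show (h.symm.trans f.symm) c = (h.symm c).bind f.symm from rfl,
    (eq_some_iff h).2 hbc, Option.bind_some, hb]

lemma _root_.PEquiv.finite_setOf_trans_eq_right {α β γ : Type*} {f : α ≃. β} {g : α ≃. γ}
    (hf : {b | f.symm b = none}.Finite) (hg : {c | g.symm c = none}.Finite) :
    {h : β ≃. γ | f.trans h = g}.Finite := by
  set F := {b | f.symm b = none}
  set T : Set (Option γ) := insert none (some '' {c | g.symm c = none})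
  have := hf.to_subtype
  let restrict : (β ≃. γ) → (F → Option γ) := fun h b => h b
  have hmaps : MapsTo restrict {h | f.trans h = g} (univ.pi fun _ => T) := by
    intro h hfg b _
    change h b ∈ T
    rcases hb : h b with _ | c
    · exact mem_insert _ _
    · exact mem_insert_of_mem _ ⟨c, symm_eq_none_of_trans_eq hfg b.2 hb, rfl⟩
  have hinj : InjOn restrict {h | f.trans h = g} := by
    intro h₁ hfg₁ h₂ hfg₂ heq
    ext1 b
    rcases hb : f.symm b with _ | a
    · exact congrFun heq ⟨b, hb⟩
    · have hab := (eq_some_iff f).1 hb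
      rw [apply_eq_of_trans_eq hfg₁ hab, apply_eq_of_trans_eq hfg₂ hab]
  exact Finite.of_finite_image ((Finite.pi fun _ => (hg.image _).insert _).subset
    hmaps.image_subset) hinj

lemma _root_.PEquiv.finite_setOf_trans_eq_left {α β γ : Type*} {f : β ≃. γ} {g : α ≃. γ}
    (hf : {b | f b = none}.Finite) (hg : {a | g a = none}.Finite) :
    {h : α ≃. β | h.trans f = g}.Finite := by
  have hsymm :
      {h : α ≃. β | h.trans f = g} ⊆ PEquiv.symm ⁻¹' {k | f.symm.trans k = g.symm} := by
    rintro h rfl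
    exact (symm_trans_rev h f).symm
  exact ((finite_setOf_trans_eq_right hf hg).preimage symm_injective.injOn).subset hsymm

end

theorem statement10_general {ι : Type*} (α β : Icf ι) :
    {χ : Icf ι | α * χ = β}.Finite ∧ {χ : Icf ι | χ * α = β}.Finite :=
  ⟨((PEquiv.finite_setOf_trans_eq_right α.2.2 β.2.2).preimage Subtype.val_injective.injOn).subset
      fun _ hχ => congrArg Subtype.val hχ,
    ((PEquiv.finite_setOf_trans_eq_left α.2.1 β.2.1).preimage Subtype.val_injective.injOn).subset
      fun _ hχ => congrArg Subtype.val hχ⟩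

/-- For all `α β` in `Icf ι`, the solution sets of `α·χ = β` and `χ·α = β` are finite;
consequently translations in `Icf ι` are finite-to-one. -/
theorem statement10 {ι : Type*} [Infinite ι] (α β : Icf ι) :
    {χ : Icf ι | α * χ = β}.Finite ∧ {χ : Icf ι | χ * α = β}.Finite :=
  statement10_general α β

end IcfPaper
end
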